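/- Cooper-field density evolution: if d : ℝ → M₄(ℂ) is a self-consistent trajectory, then for all t ∈ ℝ one has Tr(d(t)·A↓A↑) = Tr(d(0)·A↓A↑) · exp(i·t·ν), where ν := 2(μ−λ) + γ·(1 − Re Tr(d(0)·(n↑+n↓))). -/

import Mathlib

/-! The pair operator `B = A↓A↑` and the number operator `N = n↑ + n↓` have explicit commutators
with `dh c`: `[N, dh c] = 2γ (c̄ B − c B*)` and `[B, dh c] = 2(λ − μ) B − γ c (1 − N)`. Along a
self-consistent trajectory `c = Tr(d B)` and, `d` being Hermitian, `Tr(d B*) = c̄`, so the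
Heisenberg equation gives `Tr(d N)' = 0`. With `Tr(d N)` frozen at its (real) initial value, the
Cooper field `Tr(d B)` obeys the linear equation `α' = i ν α`, whose solution is `α(0) e^{iνt}`. -/

open Matrix
open scoped ComplexOrder

noncomputable section

/-- `M₄(ℂ)`, the algebra of 4×4 complex matrices, identified with the linear
operators on the one-site fermionic Fock space `ℂ⁴`. -/
abbrev M4 : Type := Matrix (Fin 4) (Fin 4) ℂ

noncomputable instance : NormedAddCommGroup M4 := Matrix.normedAddCommGroup
noncomputable instance : NormedSpace ℝ M4 := Matrix.normedSpace

/-- The canonical anticommutation relations for the two matrices `A↑ = Aup`,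
`A↓ = Adn`: `Aₛ·Aₜ + Aₜ·Aₛ = 0` and `Aₛ·Aₜ* + Aₜ*·Aₛ = δ_{s,t}·1` for
`s, t ∈ {↑,↓}`. -/
def CAR (Aup Adn : M4) : Prop :=
  Aup * Aup + Aup * Aup = 0 ∧
  Aup * Adn + Adn * Aup = 0 ∧
  Adn * Adn + Adn * Adn = 0 ∧
  Aup * Aupᴴ + Aupᴴ * Aup = 1 ∧
  Aup * Adnᴴ + Adnᴴ * Aup = 0 ∧
  Adn * Aupᴴ + Aupᴴ * Adn = 0 ∧
  Adn * Adnᴴ + Adnᴴ * Adn = 1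

/-- `dh(c) := 2λ n↑n↓ − μ(n↑+n↓) − h(n↑−n↓) − γ(c·A↑*A↓* + c̄·A↓A↑)`,
where `nₛ := Aₛ*·Aₛ`. -/
def dh (Aup Adn : M4) (mu h lam gam : ℝ) (c : ℂ) : M4 :=
  (2 * lam : ℂ) • (Aupᴴ * Aup * (Adnᴴ * Adn))
    - (mu : ℂ) • (Aupᴴ * Aup + Adnᴴ * Adn)
    - (h : ℂ) • (Aupᴴ * Aup - Adnᴴ * Adn)
    - (gam : ℂ) • (c • (Aupᴴ * Adnᴴ) + (starRingEnd ℂ c) • (Adn * Aup))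

/-- A density matrix: Hermitian, positive semidefinite, of trace 1. -/
def IsDensityMatrix (d : M4) : Prop :=
  d.IsHermitian ∧ d.PosSemidef ∧ d.trace = 1

/-- A self-consistent trajectory: a differentiable map `d : ℝ → M₄(ℂ)` such that
`d t` is a density matrix for all `t` and
`d′(t) = −i·[dh(Tr(d(t)·A↓A↑)), d(t)]` for all `t ∈ ℝ`. -/
def SelfConsistent (Aup Adn : M4) (mu h lam gam : ℝ) (d : ℝ → M4) : Prop :=
  (∀ t : ℝ, IsDensityMatrix (d t)) ∧
  ∀ t : ℝ, HasDerivAt d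
      ((-Complex.I) •
        (dh Aup Adn mu h lam gam ((d t * (Adn * Aup)).trace) * d t
          - d t * dh Aup Adn mu h lam gam ((d t * (Adn * Aup)).trace))) t

attribute [local instance] LieRing.ofAssociativeRing

section Ring

variable {R : Type*} [Ring R] {x y z : R}

theorem mul_mul_eq_self_of_mul_self_eq_zero (hx : x * x = 0) (hxy : x * y + y * x = 1) :
    x * (y * x) = x := by
  calc x * (y * x) = (x * y + y * x) * x - y * (x * x) := by noncomm_ring
    _ = x := by rw [hxy, hx, one_mul, mul_zero, sub_zero]

theorem commute_mul_of_anticommute (hy : x * y = -(y * x)) (hz : x * z = -(z * x)) :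
    Commute x (y * z) := by
  calc x * (y * z) = x * y * z := (mul_assoc _ _ _).symm
    _ = y * z * x := by rw [hy, neg_mul, mul_assoc, hz, mul_neg, neg_neg, mul_assoc]

end Ring

theorem Matrix.trace_lie_mul {n R : Type*} [Fintype n] [CommRing R]
    (X Y Z : Matrix n n R) : (⁅X, Y⁆ * Z).trace = (Y * ⁅Z, X⁆).trace := by
  rw [Ring.lie_def, Ring.lie_def, sub_mul, mul_sub, trace_sub, trace_sub, mul_assoc,
    trace_mul_comm X, mul_assoc, mul_assoc]

theorem Matrix.conjTranspose_lie {n R : Type*} [Fintype n] [CommRing R]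
    [StarRing R] (X Y : Matrix n n R) : ⁅X, Y⁆ᴴ = ⁅Yᴴ, Xᴴ⁆ := by
  rw [Ring.lie_def, Ring.lie_def, conjTranspose_sub, conjTranspose_mul, conjTranspose_mul]

theorem Matrix.IsHermitian.trace_mul_conjTranspose {n R : Type*} [Fintype n] [CommSemiring R]
    [StarRing R] {d : Matrix n n R} (hd : d.IsHermitian) (X : Matrix n n R) :
    (d * Xᴴ).trace = star (d * X).trace := by
  rw [← trace_conjTranspose, conjTranspose_mul, hd.eq, trace_mul_comm]

theorem Matrix.IsHermitian.ofReal_re_trace_mul {n : Type*} [Fintype n] {d X : Matrix n n ℂ}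
    (hd : d.IsHermitian) (hX : X.IsHermitian) : ((d * X).trace.re : ℂ) = (d * X).trace := by
  refine Complex.conj_eq_iff_re.mp ?_
  rw [← Complex.star_def, ← hd.trace_mul_conjTranspose, hX.eq]

theorem eq_mul_exp_of_hasDerivAt {f : ℝ → ℂ} {k : ℂ} (hf : ∀ t, HasDerivAt f (k * f t) t)
    (t : ℝ) : f t = f 0 * Complex.exp (k * t) := by
  have hexp (s : ℝ) :
      HasDerivAt (fun u : ℝ => Complex.exp (-k * u)) (Complex.exp (-k * s) * -k) s :=
    ((Complex.ofRealCLM.hasDerivAt (x := s)).const_mul (-k)).cexp.congr_deriv (by simp)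
  have hconst (s : ℝ) : HasDerivAt (fun u : ℝ => f u * Complex.exp (-k * u)) 0 s :=
    ((hf s).mul (hexp s)).congr_deriv (by ring)
  have h := is_const_of_deriv_eq_zero (fun s => (hconst s).differentiableAt)
    (fun s => (hconst s).deriv) t 0
  rw [Complex.ofReal_zero, mul_zero, Complex.exp_zero, mul_one] at h
  rw [← h, mul_assoc, ← Complex.exp_add, neg_mul, neg_add_cancel, Complex.exp_zero, mul_one]

theorem HasDerivAt.trace_mul_right {d : ℝ → M4} {v : M4} {t : ℝ} (hd : HasDerivAt d v t)
    (C : M4) : HasDerivAt (fun s => (d s * C).trace) (v * C).trace t :=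
  (LinearMap.toContinuousLinearMap
    ((traceLinearMap (Fin 4) ℝ ℂ).comp (LinearMap.mulRight ℝ C))).hasFDerivAt.comp_hasDerivAt t hd

namespace CAR

variable {a b : M4}

theorem symm (hab : CAR a b) : CAR b a := by
  obtain ⟨h1, h2, h3, h4, h5, h6, h7⟩ := hab
  exact ⟨h3, by rw [add_comm, h2], h1, h7, h6, h5, h4⟩

theorem mul_self (hab : CAR a b) : a * a = 0 := by
  have h : (2 : ℂ) • (a * a) = 0 := by rw [two_smul]; exact hab.1
  simpa using h

theorem commute_number_up (hab : CAR a b) : Commute b (aᴴ * a) :=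
  commute_mul_of_anticommute (eq_neg_of_add_eq_zero_left hab.2.2.2.2.2.1)
    (eq_neg_of_add_eq_zero_right hab.2.1)

theorem commute_number_dn (hab : CAR a b) : Commute a (bᴴ * b) :=
  commute_mul_of_anticommute (eq_neg_of_add_eq_zero_left hab.2.2.2.2.1)
    (eq_neg_of_add_eq_zero_left hab.2.1)

theorem commute_conjTranspose_number_dn (hab : CAR a b) : Commute aᴴ (bᴴ * b) :=
  commute_mul_of_anticommute
    (eq_neg_of_add_eq_zero_right (by simpa using congrArg conjTranspose hab.2.1))
    (eq_neg_of_add_eq_zero_right hab.2.2.2.2.2.1)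

theorem commute_number_up_number_dn (hab : CAR a b) : Commute (aᴴ * a) (bᴴ * b) :=
  hab.commute_conjTranspose_number_dn.mul_left hab.commute_number_dn

theorem pair_mul_number_up (hab : CAR a b) : b * a * (aᴴ * a) = b * a := by
  rw [mul_assoc, mul_mul_eq_self_of_mul_self_eq_zero hab.mul_self hab.2.2.2.1]

theorem number_up_mul_pair (hab : CAR a b) : aᴴ * a * (b * a) = 0 := by
  rw [← mul_assoc, ← hab.commute_number_up.eq, mul_assoc, mul_assoc, hab.mul_self, mul_zero,
    mul_zero]

theorem pair_mul_number_dn (hab : CAR a b) : b * a * (bᴴ * b) = b * a := by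
  rw [mul_assoc, hab.commute_number_dn.eq, ← mul_assoc,
    mul_mul_eq_self_of_mul_self_eq_zero hab.symm.mul_self hab.2.2.2.2.2.2]

theorem number_dn_mul_pair (hab : CAR a b) : bᴴ * b * (b * a) = 0 := by
  rw [mul_assoc, ← mul_assoc b, hab.symm.mul_self, zero_mul, mul_zero]

theorem lie_pair_number_up (hab : CAR a b) : ⁅b * a, aᴴ * a⁆ = b * a := by
  rw [Ring.lie_def, hab.pair_mul_number_up, hab.number_up_mul_pair, sub_zero]

theorem lie_pair_number_dn (hab : CAR a b) : ⁅b * a, bᴴ * b⁆ = b * a := by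
  rw [Ring.lie_def, hab.pair_mul_number_dn, hab.number_dn_mul_pair, sub_zero]

theorem lie_pair_number_up_mul_number_dn (hab : CAR a b) :
    ⁅b * a, aᴴ * a * (bᴴ * b)⁆ = b * a := by
  rw [Ring.lie_def, ← mul_assoc, hab.pair_mul_number_up, hab.pair_mul_number_dn, mul_assoc,
    hab.number_dn_mul_pair, mul_zero, sub_zero]

theorem lie_number_up_pair_conjTranspose (hab : CAR a b) : ⁅aᴴ * a, aᴴ * bᴴ⁆ = aᴴ * bᴴ := by
  simpa [conjTranspose_lie] using congrArg conjTranspose hab.lie_pair_number_up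

theorem lie_number_dn_pair_conjTranspose (hab : CAR a b) : ⁅bᴴ * b, aᴴ * bᴴ⁆ = aᴴ * bᴴ := by
  simpa [conjTranspose_lie] using congrArg conjTranspose hab.lie_pair_number_dn

theorem lie_pair_pair_conjTranspose (hab : CAR a b) :
    ⁅b * a, aᴴ * bᴴ⁆ = 1 - (aᴴ * a + bᴴ * b) := by
  calc ⁅b * a, aᴴ * bᴴ⁆ = b * (a * aᴴ) * bᴴ - aᴴ * (bᴴ * b) * a := by
        simp only [Ring.lie_def, mul_assoc]
    _ = b * bᴴ - b * (aᴴ * a) * bᴴ - bᴴ * b * (aᴴ * a) := by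
        rw [eq_sub_of_add_eq hab.2.2.2.1, hab.commute_conjTranspose_number_dn.eq]; noncomm_ring
    _ = b * bᴴ - aᴴ * a * (b * bᴴ) - bᴴ * b * (aᴴ * a) := by
        rw [hab.commute_number_up.eq]; noncomm_ring
    _ = 1 - (aᴴ * a + bᴴ * b) := by
        rw [eq_sub_of_add_eq hab.2.2.2.2.2.2, mul_sub, mul_one,
          hab.commute_number_up_number_dn.eq]
        abel

theorem lie_pair_dh (hab : CAR a b) (mu h lam gam : ℝ) (c : ℂ) :
    ⁅b * a, dh a b mu h lam gam c⁆
      = (2 * lam - 2 * mu : ℂ) • (b * a) - ((gam : ℂ) * c) • (1 - (aᴴ * a + bᴴ * b)) := by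
  simp only [dh, lie_sub, lie_add, lie_smul, lie_self, hab.lie_pair_number_up,
    hab.lie_pair_number_dn, hab.lie_pair_number_up_mul_number_dn, hab.lie_pair_pair_conjTranspose]
  module

theorem lie_number_dh (hab : CAR a b) (mu h lam gam : ℝ) (c : ℂ) :
    ⁅aᴴ * a + bᴴ * b, dh a b mu h lam gam c⁆
      = ((2 * gam : ℂ) * starRingEnd ℂ c) • (b * a) - ((2 * gam : ℂ) * c) • (aᴴ * bᴴ) := by
  have hud := hab.commute_number_up_number_dn
  simp only [dh, lie_sub, lie_add, add_lie, lie_smul, lie_self, ← lie_skew (aᴴ * a) (b * a),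
    ← lie_skew (bᴴ * b) (b * a),
    hab.lie_pair_number_up, hab.lie_pair_number_dn, hab.lie_number_up_pair_conjTranspose,
    hab.lie_number_dn_pair_conjTranspose, hud.lie_eq, hud.symm.lie_eq,
    ((Commute.refl _).mul_right hud).lie_eq, (hud.symm.mul_right (Commute.refl _)).lie_eq]
  module

end CAR

namespace SelfConsistent

variable {a b : M4} {mu h lam gam : ℝ} {d : ℝ → M4}

theorem hasDerivAt_trace_mul (hd : SelfConsistent a b mu h lam gam d) (C : M4) (t : ℝ) :
    HasDerivAt (fun s => (d s * C).trace)
      (-Complex.I * (d t * ⁅C, dh a b mu h lam gam (d t * (b * a)).trace⁆).trace) t := by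
  convert (hd.2 t).trace_mul_right C using 1
  rw [← Ring.lie_def, smul_mul_assoc, trace_smul, trace_lie_mul, smul_eq_mul]

theorem trace_mul_number_eq (hab : CAR a b) (hd : SelfConsistent a b mu h lam gam d) (t : ℝ) :
    (d t * (aᴴ * a + bᴴ * b)).trace = (d 0 * (aᴴ * a + bᴴ * b)).trace := by
  have hderiv (s : ℝ) : HasDerivAt (fun s => (d s * (aᴴ * a + bᴴ * b)).trace) 0 s := by
    have hconj : (d s * (aᴴ * bᴴ)).trace = star (d s * (b * a)).trace := by
      simpa using (hd.1 s).1.trace_mul_conjTranspose (b * a)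
    convert hd.hasDerivAt_trace_mul _ s using 1
    rw [hab.lie_number_dh, mul_sub, mul_smul_comm, mul_smul_comm, trace_sub, trace_smul,
      trace_smul, hconj, smul_eq_mul, smul_eq_mul, Complex.star_def]
    ring
  exact is_const_of_deriv_eq_zero (fun s => (hderiv s).differentiableAt)
    (fun s => (hderiv s).deriv) t 0

theorem hasDerivAt_trace_mul_pair (hab : CAR a b) (hd : SelfConsistent a b mu h lam gam d)
    (t : ℝ) :
    HasDerivAt (fun s => (d s * (b * a)).trace)
      (Complex.I * ((2 * (mu - lam) + gam * (1 - (d 0 * (aᴴ * a + bᴴ * b)).trace.re) : ℝ) : ℂ)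
        * (d t * (b * a)).trace) t := by
  have hN : (d t * (aᴴ * a + bᴴ * b)).trace = ((d 0 * (aᴴ * a + bᴴ * b)).trace.re : ℂ) := by
    rw [hd.trace_mul_number_eq hab t, (hd.1 0).1.ofReal_re_trace_mul
      ((isHermitian_conjTranspose_mul_self a).add (isHermitian_conjTranspose_mul_self b))]
  convert hd.hasDerivAt_trace_mul (b * a) t using 1
  simp only [hab.lie_pair_dh, mul_sub, mul_smul_comm, trace_sub, trace_smul, mul_one,
    (hd.1 t).2.2, hN, smul_eq_mul]
  push_cast
  ring

end SelfConsistent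

theorem cooper_field_evolution_general (Aup Adn : M4) (hCAR : CAR Aup Adn)
    (mu h lam gam : ℝ)
    (d : ℝ → M4) (hd : SelfConsistent Aup Adn mu h lam gam d) :
    ∀ t : ℝ, (d t * (Adn * Aup)).trace
      = (d 0 * (Adn * Aup)).trace *
          Complex.exp (Complex.I * (t : ℂ) *
            ((2 * (mu - lam)
              + gam * (1 - ((d 0 * (Aupᴴ * Aup + Adnᴴ * Adn)).trace).re) : ℝ) : ℂ)) := by
  intro t
  rw [mul_right_comm Complex.I]
  exact eq_mul_exp_of_hasDerivAt (hd.hasDerivAt_trace_mul_pair hCAR) t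

/-- Cooper-field density evolution:
`Tr(d(t)·A↓A↑) = Tr(d(0)·A↓A↑)·exp(i·t·ν)` with
`ν = 2(μ−λ) + γ·(1 − Re Tr(d(0)·(n↑+n↓)))`. -/
theorem cooper_field_evolution (Aup Adn : M4) (hCAR : CAR Aup Adn)
    (mu h lam gam : ℝ) (hgam : 0 ≤ gam)
    (d : ℝ → M4) (hd : SelfConsistent Aup Adn mu h lam gam d) :
    ∀ t : ℝ, (d t * (Adn * Aup)).trace
      = (d 0 * (Adn * Aup)).trace *
          Complex.exp (Complex.I * (t : ℂ) *
            ((2 * (mu - lam)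
              + gam * (1 - ((d 0 * (Aupᴴ * Aup + Adnᴴ * Adn)).trace).re) : ℝ) : ℂ)) :=
  cooper_field_evolution_general Aup Adn hCAR mu h lam gam d hd
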